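/- arXiv:1804.00154 — 4 statements merged into one kernel-verified Lean document; each statement's English description precedes it below -/
import Mathlib

section
/- Let y_0, ..., y_p ∈ R^n with x = y_0, p < n, and y_1 - x, ..., y_p - x linearly independent. Write L^T = Q̂ R̂ for the reduced QR factorization where Q̂ ∈ R^{n×p} has orthonormal columns spanning col(L^T), L being the matrix with rows (y_t - x)^T. Then the minimal norm solution (r, j) of the system r + j^T(y_t - x) = b_t (t = 0, ..., p) is given explicitly by (r, j) = diag(1, Q̂) · M^{-1} · b, where M is the (p+1)×(p+1) invertible matrix with block structure [[1, 0^T], [e, R̂^T]] and e ∈ R^p is the all-ones vector. -/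
/-!
Since `Lᵀ = Q̂ R̂`, the system reads `r = b₀`, `R̂ᵀ (Q̂ᵀ j) = (b_t)_t`, so it constrains `j` only
through `Q̂ᵀ j`. Among vectors with a given `Q̂ᵀ j` the orthogonal projection `Q̂ Q̂ᵀ j` has least
norm, hence the minimal solution satisfies `j = Q̂ c` with `c = Q̂ᵀ j`, and `(r, c)` solves the
block lower triangular system `M (r, c) = b`.
-/

open Matrix

noncomputable def enorm {k : ℕ} (v : Fin k → ℝ) : ℝ := Real.sqrt (∑ i, v i ^ 2)

namespace Matrix

/-- For `Qᵀ Q = 1`, `j` and `Q Qᵀ j` have the same image under `Qᵀ`, and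
`‖j - Q Qᵀ j‖² = ‖j‖² - ‖Q Qᵀ j‖²`. -/
theorem eq_mulVec_transpose_mulVec_of_forall_le {R m k : Type*} [Field R] [LinearOrder R]
    [IsStrictOrderedRing R] [Fintype m] [Fintype k] [DecidableEq k] {Q : Matrix m k R}
    (hQ : Qᵀ * Q = 1) {j : m → R} (hmin : ∀ j', Qᵀ *ᵥ j' = Qᵀ *ᵥ j → j ⬝ᵥ j ≤ j' ⬝ᵥ j') :
    j = Q *ᵥ (Qᵀ *ᵥ j) := by
  set c := Qᵀ *ᵥ j
  have hQc : Qᵀ *ᵥ (Q *ᵥ c) = c := by rw [mulVec_mulVec, hQ, one_mulVec]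
  have hdot : ∀ w, w ⬝ᵥ (Q *ᵥ c) = (Qᵀ *ᵥ w) ⬝ᵥ c := fun w => by
    rw [dotProduct_mulVec, ← vecMul_transpose, transpose_transpose]
  have hcross : j ⬝ᵥ (Q *ᵥ c) = (Q *ᵥ c) ⬝ᵥ (Q *ᵥ c) := by rw [hdot, hdot, hQc]
  have hle := hmin (Q *ᵥ c) hQc
  have hdiff : (j - Q *ᵥ c) ⬝ᵥ (j - Q *ᵥ c) ≤ 0 := by
    simp only [sub_dotProduct, dotProduct_sub, dotProduct_comm (Q *ᵥ c) j] at hle ⊢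
    linarith
  exact sub_eq_zero.mp (dotProduct_self_eq_zero.mp
    (le_antisymm hdiff (Finset.sum_nonneg fun i _ => mul_self_nonneg _)))

theorem fromBlocks_one_zero_mulVec_sum_elim {α l m o : Type*} [NonAssocSemiring α]
    [Fintype l] [Fintype m] [DecidableEq l]
    (C : Matrix o l α) (D : Matrix o m α) (u : l → α) (v : m → α) :
    fromBlocks 1 0 C D *ᵥ Sum.elim u v = Sum.elim u (C *ᵥ u + D *ᵥ v) := by
  rw [fromBlocks_mulVec]
  simp only [Sum.elim_comp_inl, Sum.elim_comp_inr, one_mulVec, zero_mulVec, add_zero]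

end Matrix

theorem minimal_norm_solution_QR_formula_general
    (n p : ℕ)
    (x : Fin n → ℝ) (ys : Fin p → (Fin n → ℝ))
    (Qhat : Matrix (Fin n) (Fin p) ℝ) (Rhat : Matrix (Fin p) (Fin p) ℝ)
    (horth : Qhatᵀ * Qhat = 1)
    (hQR : (Matrix.of fun t l => (ys t - x) l)ᵀ = Qhat * Rhat)
    (hRinv : IsUnit Rhat.det)
    (b0 : ℝ) (bs : Fin p → ℝ)
    (r : ℝ) (j : Fin n → ℝ)
    (hsol0 : r = b0)
    (hsolt : ∀ t, r + ∑ l, j l * (ys t l - x l) = bs t)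
    (hmin : ∀ (r' : ℝ) (j' : Fin n → ℝ), r' = b0 →
      (∀ t, r' + ∑ l, j' l * (ys t l - x l) = bs t) →
      r ^ 2 + ∑ l, j l ^ 2 ≤ r' ^ 2 + ∑ l, j' l ^ 2)
    (M : Matrix (Fin 1 ⊕ Fin p) (Fin 1 ⊕ Fin p) ℝ)
    (hM : M = Matrix.fromBlocks 1 0 (Matrix.of fun _ _ => (1 : ℝ)) Rhatᵀ)
    (D : Matrix (Fin 1 ⊕ Fin n) (Fin 1 ⊕ Fin p) ℝ)
    (hD : D = Matrix.fromBlocks 1 0 0 Qhat) :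
    IsUnit M.det ∧
      Sum.elim (fun _ : Fin 1 => r) j =
        D.mulVec (M⁻¹.mulVec (Sum.elim (fun _ : Fin 1 => b0) bs)) := by
  subst hsol0
  have hsys : ∀ j' t, ∑ l, j' l * (ys t l - x l) = (Rhatᵀ *ᵥ (Qhatᵀ *ᵥ j')) t := by
    intro j' t
    rw [mulVec_mulVec, ← transpose_mul, ← hQR]
    simp only [transpose_transpose, mulVec, dotProduct, of_apply, Pi.sub_apply, mul_comm]
  have hj : j = Qhat *ᵥ (Qhatᵀ *ᵥ j) :=
    eq_mulVec_transpose_mulVec_of_forall_le horth fun j' hj' => by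
      have := hmin r j' rfl fun t => by rw [hsys, hj', ← hsys]; exact hsolt t
      simpa only [dotProduct, sq, add_le_add_iff_left] using this
  have hdet : IsUnit M.det := by
    rwa [hM, det_fromBlocks_zero₁₂, det_one, one_mul, det_transpose]
  have := invertibleOfIsUnitDet M hdet
  have hMv : M *ᵥ Sum.elim (fun _ => r) (Qhatᵀ *ᵥ j) = Sum.elim (fun _ => r) bs := by
    rw [hM, fromBlocks_one_zero_mulVec_sum_elim]
    congr 1
    funext t
    rw [← hsolt t, hsys, Pi.add_apply]
    simp [mulVec, dotProduct]
  rw [inv_mulVec_eq_vec hMv.symm, hD, fromBlocks_one_zero_mulVec_sum_elim, zero_mulVec, zero_add,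
    ← hj]
  exact ⟨hdet, rfl⟩

/-- explicit formula for the minimal-norm solution of the underdetermined
interpolation system via the reduced QR factorization `Lᵀ = Q̂ R̂`:
`(r, j) = diag(1, Q̂) · M⁻¹ · b` where `M = [[1, 0ᵀ], [e, R̂ᵀ]]` is invertible. -/
theorem minimal_norm_solution_QR_formula
    (n p : ℕ) (hp : p < n)
    (x : Fin n → ℝ) (ys : Fin p → (Fin n → ℝ))
    (hli : LinearIndependent ℝ (fun t : Fin p => ys t - x))
    (Qhat : Matrix (Fin n) (Fin p) ℝ) (Rhat : Matrix (Fin p) (Fin p) ℝ)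
    (horth : Qhatᵀ * Qhat = 1)
    (hspan : Submodule.span ℝ (Set.range (fun t : Fin p => ys t - x)) =
      Submodule.span ℝ (Set.range (fun s : Fin p => fun i : Fin n => Qhat i s)))
    (hQR : (Matrix.of fun t l => (ys t - x) l)ᵀ = Qhat * Rhat)
    (hupper : Rhat.BlockTriangular id)
    (hRinv : IsUnit Rhat.det)
    (b0 : ℝ) (bs : Fin p → ℝ)
    (r : ℝ) (j : Fin n → ℝ)
    (hsol0 : r = b0)
    (hsolt : ∀ t, r + ∑ l, j l * (ys t l - x l) = bs t)
    (hmin : ∀ (r' : ℝ) (j' : Fin n → ℝ), r' = b0 →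
      (∀ t, r' + ∑ l, j' l * (ys t l - x l) = bs t) →
      r ^ 2 + ∑ l, j l ^ 2 ≤ r' ^ 2 + ∑ l, j' l ^ 2)
    (M : Matrix (Fin 1 ⊕ Fin p) (Fin 1 ⊕ Fin p) ℝ)
    (hM : M = Matrix.fromBlocks 1 0 (Matrix.of fun _ _ => (1 : ℝ)) Rhatᵀ)
    (D : Matrix (Fin 1 ⊕ Fin n) (Fin 1 ⊕ Fin p) ℝ)
    (hD : D = Matrix.fromBlocks 1 0 0 Qhat) :
    IsUnit M.det ∧
      Sum.elim (fun _ : Fin 1 => r) j =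
        D.mulVec (M⁻¹.mulVec (Sum.elim (fun _ : Fin 1 => b0) bs)) :=
  minimal_norm_solution_QR_formula_general n p x ys Qhat Rhat horth hQR hRinv b0 bs r j hsol0 hsolt
    hmin M hM D hD
end

section
/- Let r, J solve the regression interpolation system: for each residual index i, (r_i, j_i) is the least-squares solution of W (r_i, j_i) = (f_i(y_0), ..., f_i(y_p)), where the rows of W are (1, (y_t - x)^T) and W has full column rank. Let Ŵ = W D with D = diag(1, Δ^{-1} I_n). If each residual function f_i is differentiable with Lipschitz continuous gradient (constant L_J for the combined map), and all y_t ∈ B(x, Δ), then ‖r(x) - r‖ ≤ (1/2) L_J √p ‖Ŵ^†‖ Δ² and ‖J(x) - J‖ ≤ (1/2) L_J √p ‖Ŵ^†‖ Δ, where r(x) is the true value vector and J(x) the true Jacobian at x = y_0. -/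
/-!
Write `a i = (r_i(x), ∇r_i(x))` for the Taylor coefficients at `x`. The least-squares
coefficients satisfy the normal equations, so `a i - z i = W† (W a i - f_i(y))`, and the residual
`W a i - f_i(y)` collects the errors of the linearisation at `x` at the sample points. By the
Lipschitz bound on `J` each of these has norm at most `L_J Δ² / 2`, and the one at `y 0 = x`
vanishes, so together they have Frobenius norm at most `√p L_J Δ² / 2`. As `Ŵ† = D⁻¹ W†`,
the rescaled errors `D⁻¹ (a i - z i) = (r_i(x) - z i 0, Δ (∇r_i(x) - z i ∘ Fin.succ))` have
Frobenius norm at most `‖Ŵ†‖ √p L_J Δ² / 2`: their first column gives the value bound, the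
others, after division by `Δ` and Cauchy–Schwarz, the Jacobian bound.
-/

open Matrix

noncomputable def enorm' {k : ℕ} (v : Fin k → ℝ) : ℝ := Real.sqrt (∑ i, v i ^ 2)

open Set

theorem norm_sub_sub_fderiv_le_of_norm_fderiv_sub_le
    {E F : Type*} [NormedAddCommGroup E] [NormedSpace ℝ E]
    [NormedAddCommGroup F] [NormedSpace ℝ F]
    {f : E → F} {f' : E → E →L[ℝ] F} {x v : E} {C : ℝ}
    (hf : ∀ s ∈ Icc (0 : ℝ) 1, HasFDerivAt f (f' (x + s • v)) (x + s • v))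
    (hC : ∀ s ∈ Icc (0 : ℝ) 1, ‖(f' (x + s • v) - f' x) v‖ ≤ C * s) :
    ‖f (x + v) - f x - f' x v‖ ≤ C / 2 := by
  set g : ℝ → F := fun s => f (x + s • v) - f x - s • f' x v
  have hg : ∀ s ∈ Icc (0 : ℝ) 1, HasDerivAt g ((f' (x + s • v) - f' x) v) s := by
    intro s hs
    have hline : HasDerivAt (fun s : ℝ => x + s • v) v s := by
      simpa using ((hasDerivAt_id s).smul_const v).const_add x
    exact ((((hf s hs).comp_hasDerivAt s hline).sub_const (f x)).sub
      ((hasDerivAt_id s).smul_const (f' x v))).congr_deriv (by simp)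
  have hB (s : ℝ) : HasDerivAt (fun s => C / 2 * s ^ 2) (C * s) s :=
    ((hasDerivAt_pow 2 s).const_mul (C / 2)).congr_deriv (by ring)
  simpa [g] using image_norm_le_of_norm_deriv_right_le_deriv_boundary
    (fun s hs => (hg s hs).continuousAt.continuousWithinAt)
    (fun s hs => (hg s (Ico_subset_Icc_self hs)).hasDerivWithinAt) (by simp [g]) hB
    (fun s hs => hC s (Ico_subset_Icc_self hs)) (right_mem_Icc.2 zero_le_one)

theorem dotProduct_eq_zero_of_forall_dotProduct_self_le {ι : Type*} [Fintype ι] {q c : ι → ℝ}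
    (h : ∀ s : ℝ, q ⬝ᵥ q ≤ (q + s • c) ⬝ᵥ (q + s • c)) : q ⬝ᵥ c = 0 := by
  have hquad (s : ℝ) : 0 ≤ c ⬝ᵥ c * (s * s) + 2 * (q ⬝ᵥ c) * s + 0 := by
    have := h s
    simp only [add_dotProduct, dotProduct_add, dotProduct_smul, smul_dotProduct, smul_eq_mul,
      dotProduct_comm c q] at this
    linarith
  have := discrim_le_zero hquad
  rw [discrim] at this
  nlinarith [sq_nonneg (q ⬝ᵥ c)]

section LeastSquares

variable {ι κ : Type*} [Fintype ι] [Fintype κ] {A : Matrix ι κ ℝ} {b : ι → ℝ} {z : κ → ℝ}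

def IsLeastSquaresSolution (A : Matrix ι κ ℝ) (b : ι → ℝ) (z : κ → ℝ) : Prop :=
  ∀ c, (A *ᵥ z - b) ⬝ᵥ (A *ᵥ z - b) ≤ (A *ᵥ c - b) ⬝ᵥ (A *ᵥ c - b)

theorem IsLeastSquaresSolution.transpose_mulVec_sub_eq_zero (h : IsLeastSquaresSolution A b z) :
    Aᵀ *ᵥ (A *ᵥ z - b) = 0 := by
  have horth (c : κ → ℝ) : (A *ᵥ z - b) ⬝ᵥ (A *ᵥ c) = 0 :=
    dotProduct_eq_zero_of_forall_dotProduct_self_le fun s => by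
      simpa [mulVec_add, mulVec_smul, sub_add_eq_add_sub] using h (z + s • c)
  rw [mulVec_transpose, ← dotProduct_self_eq_zero, ← dotProduct_mulVec]
  exact horth _

variable [DecidableEq κ]

/-- The Moore–Penrose pseudoinverse of a matrix of full column rank (junk otherwise, since `⁻¹`
is `0` on singular matrices). -/
noncomputable def Matrix.pinv {R : Type*} [CommRing R] (M : Matrix ι κ R) : Matrix κ ι R :=
  (Mᵀ * M)⁻¹ * Mᵀ

theorem Matrix.pinv_mul_of_isUnit_det {R : Type*} [CommRing R] (M : Matrix ι κ R)
    {D : Matrix κ κ R} (hD : IsUnit D.det) : (M * D).pinv = D⁻¹ * M.pinv := by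
  have hDT : IsUnit Dᵀ.det := by rwa [det_transpose]
  rw [pinv, pinv, transpose_mul, Matrix.mul_assoc, ← Matrix.mul_assoc Mᵀ, Matrix.mul_inv_rev,
    Matrix.mul_inv_rev]
  simp only [Matrix.mul_assoc, nonsing_inv_mul_cancel_left _ _ hDT]

theorem isUnit_det_transpose_mul_self (hA : A.rank = Fintype.card κ) : IsUnit (Aᵀ * A).det := by
  have hrange : LinearMap.range (Aᵀ * A).mulVecLin = ⊤ := Submodule.eq_top_of_finrank_eq <| by
    rw [← Matrix.rank, rank_transpose_mul_self, hA, Module.finrank_fintype_fun_eq_card]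
  rw [← isUnit_iff_isUnit_det, ← mulVec_surjective_iff_isUnit]
  exact LinearMap.range_eq_top.1 hrange

theorem IsLeastSquaresSolution.sub_eq_pinv_mulVec (h : IsLeastSquaresSolution A b z)
    (hA : IsUnit (Aᵀ * A).det) (a : κ → ℝ) : a - z = A.pinv *ᵥ (A *ᵥ a - b) := by
  have hres : A *ᵥ a - b = A *ᵥ (a - z) + (A *ᵥ z - b) := by rw [mulVec_sub]; abel
  rw [pinv, hres, ← mulVec_mulVec, mulVec_add, h.transpose_mulVec_sub_eq_zero, add_zero,
    mulVec_mulVec, mulVec_mulVec, Matrix.mul_assoc, nonsing_inv_mul _ hA, one_mulVec]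

theorem IsLeastSquaresSolution.inv_mulVec_sub_eq_pinv_mulVec (h : IsLeastSquaresSolution A b z)
    (hA : A.rank = Fintype.card κ) {D : Matrix κ κ ℝ} (hD : IsUnit D.det) (a : κ → ℝ) :
    D⁻¹ *ᵥ (a - z) = (A * D).pinv *ᵥ (A *ᵥ a - b) := by
  rw [pinv_mul_of_isUnit_det A hD, ← mulVec_mulVec,
    h.sub_eq_pinv_mulVec (isUnit_det_transpose_mul_self hA)]

end LeastSquares

theorem sum_sq_mulVec_le {ι κ R : Type*} [Fintype ι] [Fintype κ] [CommRing R] [LinearOrder R]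
    [IsStrictOrderedRing R] (M : Matrix ι κ R) (w : κ → R) :
    ∑ i, (M *ᵥ w) i ^ 2 ≤ (∑ i, ∑ l, M i l ^ 2) * ∑ l, w l ^ 2 := by
  rw [Finset.sum_mul]
  exact Finset.sum_le_sum fun i _ => Finset.sum_mul_sq_le_sq_mul_sq Finset.univ (M i) w

section EuclideanNorm

variable {k : ℕ}

theorem enorm'_eq_norm (v : Fin k → ℝ) : enorm' v = ‖WithLp.toLp 2 v‖ := by
  simp [enorm', EuclideanSpace.norm_eq]

theorem enorm'_nonneg (v : Fin k → ℝ) : 0 ≤ enorm' v := Real.sqrt_nonneg _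

theorem sq_enorm' (v : Fin k → ℝ) : enorm' v ^ 2 = ∑ i, v i ^ 2 :=
  Real.sq_sqrt (Finset.sum_nonneg fun _ _ => sq_nonneg _)

theorem enorm'_le_iff {v : Fin k → ℝ} {c : ℝ} : enorm' v ≤ c ↔ 0 ≤ c ∧ ∑ i, v i ^ 2 ≤ c ^ 2 :=
  Real.sqrt_le_iff

theorem enorm'_smul (s : ℝ) (v : Fin k → ℝ) : enorm' (s • v) = |s| * enorm' v := by
  rw [enorm'_eq_norm, enorm'_eq_norm, WithLp.toLp_smul, norm_smul, Real.norm_eq_abs]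

theorem nonneg_of_forall_enorm'_mulVec_le {l : ℕ} {M : Matrix (Fin k) (Fin (l + 1)) ℝ} {C : ℝ}
    (h : ∀ v, enorm' (M *ᵥ v) ≤ C * enorm' v) : 0 ≤ C := by
  have := h (Pi.single 0 1)
  rw [enorm'_eq_norm (Pi.single 0 1), PiLp.toLp_single, PiLp.norm_single, norm_one,
    mul_one] at this
  exact (enorm'_nonneg _).trans this

theorem sum_sq_enorm'_transpose_le {p : ℕ} {E : Fin (p + 1) → Fin k → ℝ} {c : ℝ}
    (h0 : E 0 = 0) (h : ∀ t, enorm' (E t) ≤ c) :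
    ∑ i, enorm' (fun t => E t i) ^ 2 ≤ p * c ^ 2 := by
  simp only [sq_enorm']
  rw [Finset.sum_comm, Fin.sum_univ_succ, h0]
  have := Finset.sum_le_sum fun (t : Fin p) (_ : t ∈ Finset.univ) => (enorm'_le_iff.1 (h t.succ)).2
  simpa using this

theorem sum_sq_enorm'_le_of_le_mul_enorm' {l m p : ℕ} {d : Fin m → Fin l → ℝ}
    {E : Fin (p + 1) → Fin m → ℝ} {C c : ℝ}
    (hd : ∀ i, enorm' (d i) ≤ C * enorm' (fun t => E t i)) (h0 : E 0 = 0)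
    (hE : ∀ t, enorm' (E t) ≤ c) :
    ∑ i, enorm' (d i) ^ 2 ≤ (C * Real.sqrt p * c) ^ 2 := calc
  _ ≤ ∑ i, (C * enorm' (fun t => E t i)) ^ 2 :=
    Finset.sum_le_sum fun i _ => pow_le_pow_left₀ (enorm'_nonneg _) (hd i) 2
  _ = C ^ 2 * ∑ i, enorm' (fun t => E t i) ^ 2 := by simp only [mul_pow, Finset.mul_sum]
  _ ≤ C ^ 2 * (p * c ^ 2) := by gcongr; exact sum_sq_enorm'_transpose_le h0 hE
  _ = (C * Real.sqrt p * c) ^ 2 := by rw [mul_pow, mul_pow, Real.sq_sqrt p.cast_nonneg]; ring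

theorem IsLeastSquaresSolution.enorm'_inv_mulVec_sub_le {l : ℕ} {A : Matrix (Fin k) (Fin l) ℝ}
    {b : Fin k → ℝ} {z : Fin l → ℝ} (h : IsLeastSquaresSolution A b z) (hA : A.rank = l)
    {D : Matrix (Fin l) (Fin l) ℝ} (hD : IsUnit D.det) {C : ℝ}
    (hC : ∀ v, enorm' ((A * D).pinv *ᵥ v) ≤ C * enorm' v) (a : Fin l → ℝ) :
    enorm' (D⁻¹ *ᵥ (a - z)) ≤ C * enorm' (A *ᵥ a - b) := by
  rw [h.inv_mulVec_sub_eq_pinv_mulVec (by rwa [Fintype.card_fin]) hD]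
  exact hC _

end EuclideanNorm

theorem enorm'_add_mulVec_sub_le {n m : ℕ} {r : (Fin n → ℝ) → Fin m → ℝ}
    {J : (Fin n → ℝ) → Matrix (Fin m) (Fin n) ℝ} {x u : Fin n → ℝ} {Δ L : ℝ}
    (hderiv : ∀ u, enorm' (u - x) ≤ Δ → HasFDerivAt r (J u).mulVecLin.toContinuousLinearMap u)
    (hLip : ∀ u, enorm' (u - x) ≤ Δ → ∀ w,
      enorm' ((J u - J x) *ᵥ w) ≤ L * enorm' (u - x) * enorm' w)
    (hu : enorm' (u - x) ≤ Δ) :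
    enorm' (r x + J x *ᵥ (u - x) - r u) ≤ L / 2 * enorm' (u - x) ^ 2 := by
  have hseg : ∀ s ∈ Icc (0 : ℝ) 1, enorm' (x + s • (u - x) - x) = s * enorm' (u - x) := by
    rintro s ⟨hs₀, -⟩
    rw [add_sub_cancel_left, enorm'_smul, abs_of_nonneg hs₀]
  have hball : ∀ s ∈ Icc (0 : ℝ) 1, enorm' (x + s • (u - x) - x) ≤ Δ := fun s hs => by
    rw [hseg s hs]
    exact (mul_le_of_le_one_left (enorm'_nonneg _) hs.2).trans hu
  let e := (EuclideanSpace.equiv (Fin m) ℝ).symm.toContinuousLinearMap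
  have := norm_sub_sub_fderiv_le_of_norm_fderiv_sub_le (f := e ∘ r)
    (f' := fun w => e.comp (J w).mulVecLin.toContinuousLinearMap) (x := x) (v := u - x)
    (C := L * enorm' (u - x) ^ 2)
    (fun s hs => e.hasFDerivAt.comp _ (hderiv _ (hball s hs)))
    (fun s hs => calc
      _ = enorm' ((J (x + s • (u - x)) - J x) *ᵥ (u - x)) := by
        simp [e, enorm'_eq_norm, sub_mulVec]
      _ ≤ L * enorm' (x + s • (u - x) - x) * enorm' (u - x) := hLip _ (hball s hs) _
      _ = L * enorm' (u - x) ^ 2 * s := by rw [hseg s hs]; ring)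
  rw [enorm'_eq_norm, ← norm_neg, div_mul_eq_mul_div]
  refine Eq.trans_le (congrArg norm ?_) this
  simp only [e, WithLp.toLp_sub, WithLp.toLp_add, neg_sub, ContinuousLinearEquiv.coe_coe,
    add_sub_cancel, Function.comp_apply, PiLp.continuousLinearEquiv_symm_apply,
    ContinuousLinearMap.comp_apply, LinearMap.coe_toContinuousLinearMap', mulVecBilin_apply]
  abel

section Scaling

variable {n : ℕ} {Δ : ℝ}

theorem diagonal_cons_mul_diagonal_cons_inv (hΔ : Δ ≠ 0) :
    diagonal (Fin.cons 1 fun _ : Fin n => Δ) * diagonal (Fin.cons 1 fun _ => Δ⁻¹) = 1 := by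
  rw [diagonal_mul_diagonal, ← diagonal_one]
  congr 1
  ext k
  cases k using Fin.cases <;> simp [hΔ]

theorem sq_enorm'_diagonal_cons_mulVec (v : Fin (n + 1) → ℝ) :
    enorm' (diagonal (Fin.cons 1 fun _ : Fin n => Δ) *ᵥ v) ^ 2 =
      v 0 ^ 2 + Δ ^ 2 * ∑ l : Fin n, v l.succ ^ 2 := by
  simp [sq_enorm', mulVec_diagonal, Fin.sum_univ_succ, Finset.mul_sum, mul_pow]

theorem enorm'_le_of_sum_sq_enorm'_diagonal_cons_mulVec_le {m : ℕ} (hΔ : 0 < Δ) {K : ℝ}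
    (hK : 0 ≤ K) {e : Fin m → Fin (n + 1) → ℝ}
    (h : ∑ i, enorm' (diagonal (Fin.cons 1 fun _ : Fin n => Δ) *ᵥ e i) ^ 2 ≤ K ^ 2) :
    enorm' (fun i => e i 0) ≤ K ∧
      ∀ w, enorm' (of (fun i l => e i (Fin.succ l)) *ᵥ w) ≤ K / Δ * enorm' w := by
  simp only [sq_enorm'_diagonal_cons_mulVec, Finset.sum_add_distrib, ← Finset.mul_sum] at h
  have h0 : 0 ≤ ∑ i, e i 0 ^ 2 := Finset.sum_nonneg fun _ _ => sq_nonneg _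
  have hsucc : 0 ≤ ∑ i, ∑ l : Fin n, e i l.succ ^ 2 :=
    Finset.sum_nonneg fun _ _ => Finset.sum_nonneg fun _ _ => sq_nonneg _
  refine ⟨enorm'_le_iff.2 ⟨hK, by nlinarith⟩, fun w => ?_⟩
  refine enorm'_le_iff.2 ⟨mul_nonneg (div_nonneg hK hΔ.le) (enorm'_nonneg w),
    (sum_sq_mulVec_le _ w).trans ?_⟩
  rw [mul_pow, div_pow, sq_enorm']
  simp only [of_apply]
  gcongr
  rw [le_div_iff₀ (by positivity)]
  nlinarith

end Scaling

theorem mulVec_apply_of_row_eq_cons {ι R : Type*} [CommSemiring R] {n : ℕ}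
    {W : Matrix ι (Fin (n + 1)) R} {u : ι → Fin n → R} (hW : ∀ t, W t = Fin.cons 1 (u t))
    (c : Fin (n + 1) → R) (t : ι) :
    (W *ᵥ c) t = c 0 + ∑ l, c l.succ * u t l := by
  simp [mulVec, dotProduct, hW, Fin.sum_univ_succ, mul_comm]

theorem regression_model_error_bounds_general
    (n p m : ℕ)
    (rfun : (Fin n → ℝ) → (Fin m → ℝ))
    (Jfun : (Fin n → ℝ) → Matrix (Fin m) (Fin n) ℝ)
    (x : Fin n → ℝ) (Δ : ℝ) (hΔ : 0 < Δ)
    (LJ : ℝ) (hLJ : 0 ≤ LJ)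
    (hderiv : ∀ u, enorm' (u - x) ≤ Δ →
      HasFDerivAt rfun (LinearMap.toContinuousLinearMap ((Jfun u).mulVecLin)) u)
    (hLip : ∀ u, enorm' (u - x) ≤ Δ → ∀ v, enorm' (v - x) ≤ Δ →
      ∀ w : Fin n → ℝ,
        enorm' ((Jfun u - Jfun v).mulVec w) ≤ LJ * enorm' (u - v) * enorm' w)
    (y : Fin (p + 1) → (Fin n → ℝ)) (hy0 : y 0 = x)
    (hball : ∀ t, enorm' (y t - x) ≤ Δ)
    (W : Matrix (Fin (p + 1)) (Fin (n + 1)) ℝ)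
    (hW : ∀ t, W t = Fin.cons 1 (fun l => y t l - x l))
    (hrank : W.rank = n + 1)
    (z : Fin m → Fin (n + 1) → ℝ)
    (hls : ∀ i, ∀ z' : Fin (n + 1) → ℝ,
      ∑ t, (z i 0 + (∑ l : Fin n, z i l.succ * (y t l - x l)) - rfun (y t) i) ^ 2 ≤
        ∑ t, (z' 0 + (∑ l : Fin n, z' l.succ * (y t l - x l)) - rfun (y t) i) ^ 2)
    (D : Matrix (Fin (n + 1)) (Fin (n + 1)) ℝ)
    (hD : D = Matrix.diagonal (Fin.cons 1 (fun _ : Fin n => Δ⁻¹)))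
    (What : Matrix (Fin (p + 1)) (Fin (n + 1)) ℝ) (hWhat : What = W * D)
    (Cdag : ℝ)
    (hCdag : ∀ v : Fin (p + 1) → ℝ,
      enorm' (((Whatᵀ * What)⁻¹ * Whatᵀ).mulVec v) ≤ Cdag * enorm' v) :
    enorm' (fun i => rfun x i - z i 0) ≤ 1 / 2 * LJ * Real.sqrt p * Cdag * Δ ^ 2 ∧
      ∀ w : Fin n → ℝ,
        enorm' (fun i => (Jfun x).mulVec w i - ∑ l : Fin n, z i l.succ * w l) ≤
          1 / 2 * LJ * Real.sqrt p * Cdag * Δ * enorm' w := by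
  subst hD hWhat
  set a : Fin m → Fin (n + 1) → ℝ := fun i => Fin.cons (rfun x i) (Jfun x i)
  set E : Fin (p + 1) → Fin m → ℝ := fun t => rfun x + Jfun x *ᵥ (y t - x) - rfun (y t)
  have hrow := mulVec_apply_of_row_eq_cons (u := fun t => y t - x) hW
  have hDleft := diagonal_cons_mul_diagonal_cons_inv (n := n) hΔ.ne'
  have hres (i : Fin m) : W *ᵥ a i - (fun t => rfun (y t) i) = fun t => E t i := by
    ext t
    rw [Pi.sub_apply, hrow]
    simp [a, E, mulVec, dotProduct]
  have hscaled (i : Fin m) : enorm' (diagonal (Fin.cons 1 fun _ : Fin n => Δ) *ᵥ (a i - z i)) ≤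
      Cdag * enorm' (fun t => E t i) := by
    have hlsi : IsLeastSquaresSolution W (fun t => rfun (y t) i) (z i) := fun c => by
      simpa [dotProduct, hrow, sq] using hls i c
    rw [← inv_eq_left_inv hDleft, ← hres]
    exact hlsi.enorm'_inv_mulVec_sub_le hrank (isUnit_det_of_left_inverse hDleft) hCdag (a i)
  have htaylor (t : Fin (p + 1)) : enorm' (E t) ≤ LJ / 2 * Δ ^ 2 :=
    (enorm'_add_mulVec_sub_le hderiv (fun u hu => hLip u hu x (by simpa [enorm'] using hΔ.le))
      (hball t)).trans (by gcongr; exacts [enorm'_nonneg _, hball t])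
  have hC := nonneg_of_forall_enorm'_mulVec_le hCdag
  have hK := sum_sq_enorm'_le_of_le_mul_enorm' hscaled (by simp [E, hy0]) htaylor
  rw [show Cdag * Real.sqrt p * (LJ / 2 * Δ ^ 2) = 1 / 2 * LJ * Real.sqrt p * Cdag * Δ ^ 2 by
    ring] at hK
  obtain ⟨hval, hjac⟩ := enorm'_le_of_sum_sq_enorm'_diagonal_cons_mulVec_le hΔ (by positivity) hK
  refine ⟨by simpa [a] using hval, fun w => ?_⟩
  convert hjac w using 2
  · ext i
    simp [a, mulVec, dotProduct, sub_mul]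
  · field_simp

/-- error bounds for the regression interpolation model:
`‖r(x) - r_k‖ ≤ ½ L_J √p ‖Ŵ†‖ Δ²` and `‖J(x) - J_k‖ ≤ ½ L_J √p ‖Ŵ†‖ Δ`,
where `Ŵ† = (ŴᵀŴ)⁻¹Ŵᵀ` (full column rank pseudoinverse), `Cdag` being an operator-norm
bound for `Ŵ†`, and the Jacobian error is stated in operator-norm (pointwise) form. -/
theorem regression_model_error_bounds
    (n p m : ℕ) (hpn : n ≤ p)
    (rfun : (Fin n → ℝ) → (Fin m → ℝ))
    (Jfun : (Fin n → ℝ) → Matrix (Fin m) (Fin n) ℝ)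
    (x : Fin n → ℝ) (Δ : ℝ) (hΔ : 0 < Δ)
    (LJ : ℝ) (hLJ : 0 ≤ LJ)
    (hderiv : ∀ u, enorm' (u - x) ≤ Δ →
      HasFDerivAt rfun (LinearMap.toContinuousLinearMap ((Jfun u).mulVecLin)) u)
    (hLip : ∀ u, enorm' (u - x) ≤ Δ → ∀ v, enorm' (v - x) ≤ Δ →
      ∀ w : Fin n → ℝ,
        enorm' ((Jfun u - Jfun v).mulVec w) ≤ LJ * enorm' (u - v) * enorm' w)
    (y : Fin (p + 1) → (Fin n → ℝ)) (hy0 : y 0 = x)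
    (hball : ∀ t, enorm' (y t - x) ≤ Δ)
    (W : Matrix (Fin (p + 1)) (Fin (n + 1)) ℝ)
    (hW : ∀ t, W t = Fin.cons 1 (fun l => y t l - x l))
    (hrank : W.rank = n + 1)
    (z : Fin m → Fin (n + 1) → ℝ)
    (hls : ∀ i, ∀ z' : Fin (n + 1) → ℝ,
      ∑ t, (z i 0 + (∑ l : Fin n, z i l.succ * (y t l - x l)) - rfun (y t) i) ^ 2 ≤
        ∑ t, (z' 0 + (∑ l : Fin n, z' l.succ * (y t l - x l)) - rfun (y t) i) ^ 2)
    (D : Matrix (Fin (n + 1)) (Fin (n + 1)) ℝ)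
    (hD : D = Matrix.diagonal (Fin.cons 1 (fun _ : Fin n => Δ⁻¹)))
    (What : Matrix (Fin (p + 1)) (Fin (n + 1)) ℝ) (hWhat : What = W * D)
    (Cdag : ℝ)
    (hCdag : ∀ v : Fin (p + 1) → ℝ,
      enorm' (((Whatᵀ * What)⁻¹ * Whatᵀ).mulVec v) ≤ Cdag * enorm' v) :
    enorm' (fun i => rfun x i - z i 0) ≤ 1 / 2 * LJ * Real.sqrt p * Cdag * Δ ^ 2 ∧
      ∀ w : Fin n → ℝ,
        enorm' (fun i => (Jfun x).mulVec w i - ∑ l : Fin n, z i l.succ * w l) ≤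
          1 / 2 * LJ * Real.sqrt p * Cdag * Δ * enorm' w :=
  regression_model_error_bounds_general n p m rfun Jfun x Δ hΔ LJ hLJ hderiv hLip y hy0 hball W hW
    hrank z hls D hD What hWhat Cdag hCdag
end

section
/- Suppose a trust-region step s_k satisfies the Cauchy decrease condition m_k(0) - m_k(s_k) ≥ c_1 ‖g_k‖ min(Δ_k, ‖g_k‖ / max(‖H_k‖, 1)) with c_1 ∈ [1/2, 1], and suppose m_k is fully linear for f on B(x_k, Δ_k) with constants κ_ef, κ_eg. If ‖g_k‖ ≥ max(κ_H, 1) Δ_k (where ‖H_k‖ ≤ κ_H) and Δ_k ≤ c_1(1 - η_2)‖g_k‖ / (2 κ_ef), then the ratio ρ_k = (f(x_k) - f(x_k + s_k)) / (m_k(0) - m_k(s_k)) satisfies ρ_k ≥ η_2, i.e., the iteration is very successful. -/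
open Matrix

/-- Euclidean norm of a finite real vector. -/
noncomputable def eucNorm {k : ℕ} (v : Fin k → ℝ) : ℝ := Real.sqrt (∑ i, v i ^ 2)

/-!
The model is exact at `s = 0`, so the actual reduction differs from the predicted one by the
full-linearity error `κ_ef Δ_k²`. Since `‖g_k‖ ≥ max(‖H_k‖, 1) Δ_k`, the Cauchy decrease is at least
`c₁ ‖g_k‖ Δ_k`, and the bound on `Δ_k` makes the error at most `(1 - η₂)/2` times the predicted
reduction, which forces `ρ_k ≥ η₂`.
-/

lemma le_div_of_abs_sub_le_one_sub_mul {actual pred η : ℝ} (hpred : 0 < pred)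
    (h : |actual - pred| ≤ (1 - η) * pred) : η ≤ actual / pred := by
  rw [le_div_iff₀ hpred]
  linarith [(abs_le.1 h).1]

lemma mul_sq_le_one_sub_mul_of_le_div {κ Δ η c N pred : ℝ} (hκ : 0 < κ) (hΔ : 0 ≤ Δ)
    (hη : η ≤ 1) (hpred₀ : 0 ≤ pred) (hpred : c * N * Δ ≤ pred)
    (hsmall : Δ ≤ c * (1 - η) * N / (2 * κ)) : κ * Δ ^ 2 ≤ (1 - η) * pred := by
  have hradius : Δ * (2 * κ) ≤ c * (1 - η) * N := (le_div_iff₀ (by positivity)).1 hsmall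
  have hη' : 0 ≤ 1 - η := sub_nonneg.2 hη
  calc κ * Δ ^ 2 = Δ * (2 * κ) * Δ / 2 := by ring
    _ ≤ c * (1 - η) * N * Δ / 2 := by gcongr
    _ = (1 - η) * (c * N * Δ) / 2 := by ring
    _ ≤ (1 - η) * pred / 2 := by gcongr
    _ ≤ (1 - η) * pred := by linarith [mul_nonneg hη' hpred₀]

theorem very_successful_iteration_general
    (n : ℕ)
    (f : (Fin n → ℝ) → ℝ) (xk gk sk : Fin n → ℝ)
    (Hk : Matrix (Fin n) (Fin n) ℝ)
    (mk : (Fin n → ℝ) → ℝ)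
    (hmk : ∀ s, mk s = f xk + (∑ l, gk l * s l) +
      (1 / 2) * ∑ l, s l * Hk.mulVec s l)
    (c1 η2 κef Δk κH nH : ℝ)
    (hc1 : 1 / 2 ≤ c1) (hη2' : η2 < 1)
    (hκef : 0 < κef) (hΔ : 0 < Δk) (hsk : eucNorm sk ≤ Δk)
    (hnH : nH ≤ κH)
    (hcauchy : mk 0 - mk sk ≥ c1 * eucNorm gk * min Δk (eucNorm gk / max nH 1))
    (hfl : ∀ s : Fin n → ℝ, eucNorm s ≤ Δk → |mk s - f (xk + s)| ≤ κef * Δk ^ 2)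
    (hg : eucNorm gk ≥ max κH 1 * Δk)
    (hΔsmall : Δk ≤ c1 * (1 - η2) * eucNorm gk / (2 * κef)) :
    (f xk - f (xk + sk)) / (mk 0 - mk sk) ≥ η2 := by
  have hmk0 : mk 0 = f xk := by simp [hmk]
  have hgΔ : max nH 1 * Δk ≤ eucNorm gk :=
    (mul_le_mul_of_nonneg_right (max_le_max_right 1 hnH) hΔ.le).trans hg
  have hΔg : Δk ≤ eucNorm gk := (le_mul_of_one_le_left hΔ.le (le_max_right _ _)).trans hgΔ
  have hpred : c1 * eucNorm gk * Δk ≤ mk 0 - mk sk := by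
    rwa [min_eq_left ((le_div_iff₀' (by positivity)).2 hgΔ)] at hcauchy
  have hpred₀ : 0 < mk 0 - mk sk :=
    hpred.trans_lt' (mul_pos (mul_pos (by linarith) (hΔ.trans_le hΔg)) hΔ)
  have herr : |(f xk - f (xk + sk)) - (mk 0 - mk sk)| ≤ κef * Δk ^ 2 := by
    rw [hmk0]
    convert hfl sk hsk using 2
    ring
  exact le_div_of_abs_sub_le_one_sub_mul hpred₀ <| herr.trans <|
    mul_sq_le_one_sub_mul_of_le_div hκef hΔ.le hη2'.le hpred₀.le hpred hΔsmall

/-- the "very successful iteration" lemma: under Cauchy decrease,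
full linearity, `‖g_k‖ ≥ max(κ_H, 1) Δ_k` and `Δ_k ≤ c₁(1-η₂)‖g_k‖/(2κ_ef)`,
the trust-region ratio satisfies `ρ_k ≥ η₂`. Here `nH = ‖H_k‖ ≤ κ_H`. -/
theorem very_successful_iteration
    (n : ℕ)
    (f : (Fin n → ℝ) → ℝ) (xk gk sk : Fin n → ℝ)
    (Hk : Matrix (Fin n) (Fin n) ℝ)
    (mk : (Fin n → ℝ) → ℝ)
    (hmk : ∀ s, mk s = f xk + (∑ l, gk l * s l) +
      (1 / 2) * ∑ l, s l * Hk.mulVec s l)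
    (c1 η2 κef κeg Δk κH nH : ℝ)
    (hc1 : 1 / 2 ≤ c1) (hc1' : c1 ≤ 1) (hη2 : 0 < η2) (hη2' : η2 < 1)
    (hκef : 0 < κef) (hΔ : 0 < Δk) (hsk : eucNorm sk ≤ Δk)
    (hnH0 : 0 ≤ nH) (hnH : nH ≤ κH)
    (hHop : ∀ v : Fin n → ℝ, eucNorm (Hk.mulVec v) ≤ nH * eucNorm v)
    (hcauchy : mk 0 - mk sk ≥ c1 * eucNorm gk * min Δk (eucNorm gk / max nH 1))
    (hfl : ∀ s : Fin n → ℝ, eucNorm s ≤ Δk → |mk s - f (xk + s)| ≤ κef * Δk ^ 2)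
    (hg : eucNorm gk ≥ max κH 1 * Δk)
    (hΔsmall : Δk ≤ c1 * (1 - η2) * eucNorm gk / (2 * κef)) :
    (f xk - f (xk + sk)) / (mk 0 - mk sk) ≥ η2 :=
  very_successful_iteration_general n f xk gk sk Hk mk hmk c1 η2 κef Δk κH nH hc1 hη2' hκef hΔ hsk
    hnH hcauchy hfl hg hΔsmall
end

section
/- Combining the Gauss–Markov bound with strong Λ-poisedness: if additionally 1/σ_min(Ŵ) ≤ θ(n+1)Λ/√(p+1) for constants θ > 0, Λ ≥ 1 (strong Λ-poisedness of the scaled set Ŵ = W·diag(1, Δ^{-1} I_n)), then the operator norm of the error covariance of the regression estimator satisfies ‖Cov‖ ≤ σ² max(1, Δ^{-2}) θ² (n+1)² Λ² / (N(p+1)). In particular, the bound is inversely proportional to N(p+1), the total number of function evaluations. -/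
open Matrix

noncomputable def vecEnorm {k : ℕ} (v : Fin k → ℝ) : ℝ := Real.sqrt (∑ i, v i ^ 2)

/-!
With `Ŵ = W D`, the bound `σ_min ‖v‖ ≤ ‖Ŵ v‖` and Cauchy–Schwarz give
`σ_min² ‖v‖² ≤ ‖Ŵ v‖² = ⟪v, ŴᵀŴ v⟫ ≤ ‖v‖ ‖ŴᵀŴ v‖`, so `‖(ŴᵀŴ)⁻¹‖ ≤ σ_min⁻²`.
Since `(WᵀW)⁻¹ = D (ŴᵀŴ)⁻¹ D` and `‖D‖ ≤ max 1 Δ⁻¹`, this yields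
`‖(WᵀW)⁻¹‖ ≤ max 1 Δ⁻² / σ_min²`, and squaring the poisedness bound finishes.
That `σ_min > 0` comes from full rank: `Ŵ` is injective, and an injective linear map
between finite-dimensional spaces is bounded below.
-/

open WithLp

lemma mulVec_injective_of_rank_eq_card {K m n : Type*} [Field K] [Fintype n]
    (A : Matrix m n K) (h : A.rank = Fintype.card n) : Function.Injective A.mulVec := by
  have hker := LinearMap.finrank_range_add_finrank_ker A.mulVecLin
  rw [← Matrix.rank, h, Module.finrank_fintype_fun_eq_card, add_eq_left,
    Submodule.finrank_eq_zero] at hker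
  exact LinearMap.ker_eq_bot.mp hker

lemma inv_gram_eq_mul_inv_gram_mul {R m n : Type*} [CommRing R] [Fintype m] [Fintype n]
    [DecidableEq n] (W : Matrix m n R) {D : Matrix n n R} (hD : IsUnit D) :
    (Wᵀ * W)⁻¹ = D * ((W * D)ᵀ * (W * D))⁻¹ * Dᵀ := by
  rw [isUnit_iff_isUnit_det] at hD
  have hDT : IsUnit Dᵀ.det := by rwa [det_transpose]
  rw [transpose_mul, show Dᵀ * Wᵀ * (W * D) = Dᵀ * (Wᵀ * W) * D by simp only [Matrix.mul_assoc],
    Matrix.mul_inv_rev, Matrix.mul_inv_rev, ← Matrix.mul_assoc, ← Matrix.mul_assoc,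
    mul_nonsing_inv D hD, Matrix.one_mul, Matrix.mul_assoc, nonsing_inv_mul _ hDT, Matrix.mul_one]

lemma max_one_sq_of_nonneg {a : ℝ} (ha : 0 ≤ a) : max 1 a ^ 2 = max 1 (a ^ 2) := by
  rcases le_total 1 a with h | h
  · rw [max_eq_right h, max_eq_right (one_le_pow₀ h)]
  · rw [max_eq_left h, max_eq_left (pow_le_one₀ ha h), one_pow]

section VecEnorm

variable {m k : ℕ}

lemma vecEnorm_eq_norm_toLp (v : Fin k → ℝ) : vecEnorm v = ‖toLp 2 v‖ := by
  simp [EuclideanSpace.norm_eq, vecEnorm]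

lemma vecEnorm_nonneg (v : Fin k → ℝ) : 0 ≤ vecEnorm v := Real.sqrt_nonneg _

lemma vecEnorm_eq_zero_iff {v : Fin k → ℝ} : vecEnorm v = 0 ↔ v = 0 := by
  rw [vecEnorm_eq_norm_toLp, norm_eq_zero, toLp_eq_zero]

lemma vecEnorm_smul (c : ℝ) (v : Fin k → ℝ) : vecEnorm (c • v) = |c| * vecEnorm v := by
  rw [vecEnorm_eq_norm_toLp, vecEnorm_eq_norm_toLp, toLp_smul, norm_smul, Real.norm_eq_abs]

lemma dotProduct_le_vecEnorm_mul (v w : Fin k → ℝ) : v ⬝ᵥ w ≤ vecEnorm v * vecEnorm w := by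
  rw [vecEnorm_eq_norm_toLp, vecEnorm_eq_norm_toLp, dotProduct_comm]
  exact real_inner_le_norm (toLp 2 v) (toLp 2 w)

lemma vecEnorm_mulVec_sq (A : Matrix (Fin m) (Fin k) ℝ) (v : Fin k → ℝ) :
    vecEnorm (A *ᵥ v) ^ 2 = v ⬝ᵥ ((Aᵀ * A) *ᵥ v) := by
  rw [vecEnorm, Real.sq_sqrt (Finset.sum_nonneg fun i _ => sq_nonneg _), ← mulVec_mulVec,
    dotProduct_mulVec, vecMul_transpose]
  simp [dotProduct, sq]

lemma vecEnorm_diagonal_mulVec_le (d : Fin k → ℝ) {μ : ℝ} (hμ0 : 0 ≤ μ) (hμ : ∀ i, |d i| ≤ μ)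
    (v : Fin k → ℝ) : vecEnorm (diagonal d *ᵥ v) ≤ μ * vecEnorm v := by
  rw [vecEnorm, vecEnorm, ← Real.sqrt_sq hμ0, ← Real.sqrt_mul (sq_nonneg μ), Finset.mul_sum]
  refine Real.sqrt_le_sqrt (Finset.sum_le_sum fun i _ => ?_)
  rw [mulVec_diagonal, mul_pow, ← sq_abs (d i)]
  gcongr
  exact hμ i

lemma exists_pos_mul_vecEnorm_le_of_injective (A : Matrix (Fin m) (Fin k) ℝ)
    (hA : Function.Injective A.mulVec) : ∃ c > 0, ∀ v, c * vecEnorm v ≤ vecEnorm (A *ᵥ v) := by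
  obtain ⟨K, hK0, hK⟩ := (toLpLin 2 2 A).exists_antilipschitzWith
    (LinearMap.ker_eq_bot.mpr fun x y hxy => ofLp_injective 2 (hA (toLp_injective 2 hxy)))
  refine ⟨(K : ℝ)⁻¹, by positivity, fun v => ?_⟩
  have := hK.le_mul_dist (toLp 2 v) 0
  rw [map_zero, dist_zero_right, dist_zero_right, toLpLin_toLp] at this
  rw [inv_mul_le_iff₀ (by positivity), vecEnorm_eq_norm_toLp, vecEnorm_eq_norm_toLp]
  exact this

lemma sq_mul_vecEnorm_le_gram_mulVec (A : Matrix (Fin m) (Fin k) ℝ) {s : ℝ}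
    (hs0 : 0 ≤ s) (hs : ∀ v, s * vecEnorm v ≤ vecEnorm (A *ᵥ v)) (v : Fin k → ℝ) :
    s ^ 2 * vecEnorm v ≤ vecEnorm ((Aᵀ * A) *ᵥ v) := by
  rcases (vecEnorm_nonneg v).eq_or_lt with hv | hv
  · rw [← hv, mul_zero]; exact vecEnorm_nonneg _
  refine le_of_mul_le_mul_left ?_ hv
  calc vecEnorm v * (s ^ 2 * vecEnorm v) = (s * vecEnorm v) ^ 2 := by ring
    _ ≤ vecEnorm (A *ᵥ v) ^ 2 := by gcongr; exact hs v
    _ = v ⬝ᵥ ((Aᵀ * A) *ᵥ v) := vecEnorm_mulVec_sq A v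
    _ ≤ vecEnorm v * vecEnorm ((Aᵀ * A) *ᵥ v) := dotProduct_le_vecEnorm_mul _ _

lemma vecEnorm_inv_mulVec_le (M : Matrix (Fin k) (Fin k) ℝ) {c : ℝ} (hc : 0 < c)
    (h : ∀ v, c * vecEnorm v ≤ vecEnorm (M *ᵥ v)) (x : Fin k → ℝ) :
    vecEnorm (M⁻¹ *ᵥ x) ≤ c⁻¹ * vecEnorm x := by
  have hM : IsUnit M := mulVec_injective_iff_isUnit.mp fun u w huw => by
    have := h (u - w)
    rw [mulVec_sub, huw, sub_self, vecEnorm_eq_zero_iff.mpr rfl] at this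
    exact sub_eq_zero.mp (vecEnorm_eq_zero_iff.mp
      (le_antisymm (nonpos_of_mul_nonpos_right this hc) (vecEnorm_nonneg _)))
  have := h (M⁻¹ *ᵥ x)
  rwa [mulVec_mulVec, mul_nonsing_inv M ((isUnit_iff_isUnit_det M).mp hM), one_mulVec,
    ← le_inv_mul_iff₀ hc] at this

lemma vecEnorm_inv_gram_mulVec_le (W : Matrix (Fin m) (Fin k) ℝ) {d : Fin k → ℝ}
    (hd : IsUnit d) {μ : ℝ} (hμ0 : 0 ≤ μ) (hμ : ∀ i, |d i| ≤ μ) {s : ℝ} (hs : 0 < s)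
    (hlow : ∀ v, s * vecEnorm v ≤ vecEnorm ((W * diagonal d) *ᵥ v)) (v : Fin k → ℝ) :
    vecEnorm ((Wᵀ * W)⁻¹ *ᵥ v) ≤ μ ^ 2 * (s ^ 2)⁻¹ * vecEnorm v := by
  have hgram := vecEnorm_inv_mulVec_le _ (by positivity)
    (sq_mul_vecEnorm_le_gram_mulVec _ hs.le hlow)
  have hdiag := vecEnorm_diagonal_mulVec_le d hμ0 hμ
  rw [inv_gram_eq_mul_inv_gram_mul W (isUnit_diagonal.mpr hd), diagonal_transpose,
    ← mulVec_mulVec, ← mulVec_mulVec]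
  calc _ ≤ μ * ((s ^ 2)⁻¹ * (μ * vecEnorm v)) := by grw [hdiag, hgram, hdiag]
    _ = μ ^ 2 * (s ^ 2)⁻¹ * vecEnorm v := by ring

end VecEnorm

theorem covariance_bound_strong_poisedness_general
    (n p N : ℕ)
    (σ θ Λ Δ : ℝ) (hΔ : 0 < Δ)
    (W : Matrix (Fin (p + 1)) (Fin (n + 1)) ℝ)
    (hrank : W.rank = n + 1)
    (D : Matrix (Fin (n + 1)) (Fin (n + 1)) ℝ)
    (hD : D = Matrix.diagonal (Fin.cons 1 (fun _ : Fin n => Δ⁻¹)))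
    (What : Matrix (Fin (p + 1)) (Fin (n + 1)) ℝ) (hWhat : What = W * D)
    (smin : ℝ)
    (hsmin : IsGreatest
      {c : ℝ | ∀ v : Fin (n + 1) → ℝ, c * vecEnorm v ≤ vecEnorm (What.mulVec v)} smin)
    (hpoised : 1 / smin ≤ θ * (n + 1) * Λ / Real.sqrt (p + 1)) :
    ∀ v : Fin (n + 1) → ℝ,
      vecEnorm (((σ ^ 2 / N) • (Wᵀ * W)⁻¹).mulVec v) ≤
        σ ^ 2 * max 1 (Δ⁻¹ ^ 2) * θ ^ 2 * (n + 1) ^ 2 * Λ ^ 2 / (N * (p + 1)) *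
          vecEnorm v := by
  intro v
  subst hWhat hD
  set d : Fin (n + 1) → ℝ := Fin.cons 1 fun _ => Δ⁻¹
  have hd : IsUnit d :=
    Pi.isUnit_iff.mpr <| Fin.cases isUnit_one fun _ => (inv_pos.mpr hΔ).ne'.isUnit
  have hdμ : ∀ i, |d i| ≤ max 1 Δ⁻¹ :=
    Fin.cases (by simp [d]) fun _ => by simp [d, abs_of_pos hΔ]
  have hinj : Function.Injective (W * diagonal d).mulVec := by
    rw [show (W * diagonal d).mulVec = W.mulVec ∘ (diagonal d).mulVec from
      funext fun u => (mulVec_mulVec u W _).symm]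
    exact (mulVec_injective_of_rank_eq_card W (by simpa using hrank)).comp
      (mulVec_injective_of_isUnit (isUnit_diagonal.mpr hd))
  obtain ⟨c, hc, hcW⟩ := exists_pos_mul_vecEnorm_le_of_injective _ hinj
  have hspos : 0 < smin := hc.trans_le (hsmin.2 hcW)
  have hcov := vecEnorm_inv_gram_mulVec_le W hd (by positivity) hdμ hspos hsmin.1 v
  have hsmin_inv : (smin ^ 2)⁻¹ ≤ θ ^ 2 * (n + 1) ^ 2 * Λ ^ 2 / (p + 1) := by
    calc (smin ^ 2)⁻¹ = (1 / smin) ^ 2 := by rw [one_div, inv_pow]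
      _ ≤ (θ * (n + 1) * Λ / √(p + 1)) ^ 2 := by gcongr
      _ = θ ^ 2 * (n + 1) ^ 2 * Λ ^ 2 / (p + 1) := by
        rw [div_pow, Real.sq_sqrt (by positivity)]; ring
  rw [smul_mulVec, vecEnorm_smul, abs_of_nonneg (by positivity),
    ← max_one_sq_of_nonneg (inv_nonneg.mpr hΔ.le)]
  calc _ ≤ σ ^ 2 / N * (max 1 Δ⁻¹ ^ 2 * (θ ^ 2 * (n + 1) ^ 2 * Λ ^ 2 / (p + 1)) * vecEnorm v) :=
        by grw [hcov, hsmin_inv]; exact vecEnorm_nonneg v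
    _ = _ := by rw [← div_div]; ring

/-- combining the Gauss–Markov covariance `Cov = (σ²/N)(WᵀW)⁻¹` with
strong Λ-poisedness `1/σ_min(Ŵ) ≤ θ(n+1)Λ/√(p+1)` gives
`‖Cov‖ ≤ σ² max(1, Δ⁻²) θ² (n+1)² Λ² / (N(p+1))` (operator norm stated pointwise). -/
theorem covariance_bound_strong_poisedness
    (n p N : ℕ) (hpn : n ≤ p) (hN : 1 ≤ N)
    (σ θ Λ Δ : ℝ) (hσ : 0 < σ) (hθ : 0 < θ) (hΛ : 1 ≤ Λ) (hΔ : 0 < Δ)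
    (W : Matrix (Fin (p + 1)) (Fin (n + 1)) ℝ)
    (hrank : W.rank = n + 1)
    (D : Matrix (Fin (n + 1)) (Fin (n + 1)) ℝ)
    (hD : D = Matrix.diagonal (Fin.cons 1 (fun _ : Fin n => Δ⁻¹)))
    (What : Matrix (Fin (p + 1)) (Fin (n + 1)) ℝ) (hWhat : What = W * D)
    (smin : ℝ)
    (hsmin : IsGreatest
      {c : ℝ | ∀ v : Fin (n + 1) → ℝ, c * vecEnorm v ≤ vecEnorm (What.mulVec v)} smin)
    (hpoised : 1 / smin ≤ θ * (n + 1) * Λ / Real.sqrt (p + 1)) :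
    ∀ v : Fin (n + 1) → ℝ,
      vecEnorm (((σ ^ 2 / N) • (Wᵀ * W)⁻¹).mulVec v) ≤
        σ ^ 2 * max 1 (Δ⁻¹ ^ 2) * θ ^ 2 * (n + 1) ^ 2 * Λ ^ 2 / (N * (p + 1)) *
          vecEnorm v :=
  covariance_bound_strong_poisedness_general n p N σ θ Λ Δ hΔ W hrank D hD What hWhat smin hsmin
    hpoised
end
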